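/- Let p : Y → X be a proper holomorphic surjective submersion of complex manifolds with X connected and with connected fibers, and let F : Y → Y be holomorphic. Then the set S = {x ∈ X : there exists x' ∈ X with F(p⁻¹{x}) ⊆ p⁻¹{x'}} is open in X. -/

import Mathlib

open scoped Manifold Topology
open Function Set Filter Metric

/-!
Fix `x₀` with `F (p⁻¹{x₀}) ⊆ p⁻¹{x'}` and a chart `e` of `X` at `x'`. As `p` is proper, hence
closed, every fiber `K` over a neighborhood of `x₀` is mapped by `p ∘ F` into the domain of `e`, so
`e ∘ p ∘ F` is a vector-valued holomorphic function near `K`. Since `p` is a submersion, the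
holomorphic implicit function theorem parametrizes `K` locally by holomorphic maps (a holomorphic
map of several variables is `C¹`, its directional derivatives being one-variable derivatives that
depend continuously on parameters). By the maximum modulus principle along these
parametrizations, the set where `e ∘ p ∘ F` takes its value at a point of maximal norm is open in
`K`; it is also closed, so it is all of the compact connected fiber `K`.
-/

theorem IsPreconnected.eqOn_const_of_eventually_eq {α β : Type*} [TopologicalSpace α]
    [TopologicalSpace β] [T1Space β] {K : Set α} (hK : IsPreconnected K) {g : α → β}
    (hg : ContinuousOn g K) {c : α} (hc : c ∈ K)
    (hloc : ∀ y ∈ K, g y = g c → ∀ᶠ z in 𝓝[K] y, g z = g c) :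
    EqOn g (const α (g c)) K := by
  have := isPreconnected_iff_preconnectedSpace.1 hK
  set V : Set K := K.domRestrict g ⁻¹' {g c}
  have hVclosed : IsClosed V :=
    isClosed_singleton.preimage (continuousOn_iff_continuous_domRestrict.1 hg)
  have hVopen : IsOpen V := isOpen_iff_mem_nhds.2 fun z hz => by
    rw [mem_nhds_subtype_iff_nhdsWithin]
    filter_upwards [hloc z z.2 hz, self_mem_nhdsWithin] with w hw hwK
    exact ⟨⟨w, hwK⟩, hw, rfl⟩
  have hV : V = univ := IsClopen.eq_univ ⟨hVclosed, hVopen⟩ ⟨⟨c, hc⟩, rfl⟩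
  exact fun z hz => show (⟨z, hz⟩ : K) ∈ V from hV ▸ mem_univ _

theorem IsCompact.tendstoUniformlyOn_of_continuousOn {α β γ : Type*} [TopologicalSpace α]
    [TopologicalSpace β] [UniformSpace γ] {f : α → β → γ} {s : Set α} {k : Set β} {q : α}
    (hk : IsCompact k) (hf : ContinuousOn ↿f (s ×ˢ k)) (hs : s ∈ 𝓝 q) :
    TendstoUniformlyOn f (f q) (𝓝 q) k := by
  intro u hu
  obtain ⟨v, hv, hvu⟩ :=
    hk.mem_uniformity_of_prod hf (mem_of_mem_nhds hs) (symm_le_uniformity hu)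
  rw [nhdsWithin_eq_nhds.2 hs] at hv
  filter_upwards [hv] with p hp x hx using hvu p hp x hx

theorem DifferentiableOn.continuousOn_fderiv_apply {E F : Type*} [NormedAddCommGroup E]
    [NormedSpace ℂ E] [NormedAddCommGroup F] [NormedSpace ℂ F] [CompleteSpace F]
    {f : E → F} {U : Set E} (hf : DifferentiableOn ℂ f U) (hU : IsOpen U) (v : E) :
    ContinuousOn (fun z => fderiv ℂ f z v) U := by
  intro a ha
  set L : E → ℂ → F := fun z t => f (z + t • v)
  have hline : Continuous fun q : E × ℂ => q.1 + q.2 • v := by fun_prop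
  obtain ⟨r, hr, hball⟩ :
      ∃ r > 0, ball a r ×ˢ ball (0 : ℂ) r ⊆ {q : E × ℂ | q.1 + q.2 • v ∈ U} := by
    obtain ⟨r, hr, h⟩ := Metric.isOpen_iff.1 (hU.preimage hline) (a, 0) (by simpa using ha)
    exact ⟨r, hr, by rwa [ball_prod_same]⟩
  have hL_diff : ∀ z ∈ ball a r, ∀ t ∈ ball (0 : ℂ) r,
      HasDerivAt (L z) (fderiv ℂ f (z + t • v) v) t := fun z hz t ht => by
    have hfz := (hf.differentiableAt (hU.mem_nhds (hball (mk_mem_prod hz ht)))).hasFDerivAt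
    simpa [L, Function.comp_def] using
      hfz.comp_hasDerivAt t (((hasDerivAt_id t).smul_const v).const_add z)
  have hconv : TendstoLocallyUniformlyOn L (L a) (𝓝 a) (ball 0 r) :=
    (tendstoLocallyUniformlyOn_iff_forall_isCompact isOpen_ball).2 fun K hK hKc =>
      hKc.tendstoUniformlyOn_of_continuousOn
        ((hf.continuousOn.comp hline.continuousOn hball).mono (prod_mono subset_rfl hK))
        (ball_mem_nhds a hr)
  have hderiv := (hconv.deriv (eventually_of_mem (ball_mem_nhds a hr) fun z hz t ht =>
    (hL_diff z hz t ht).differentiableAt.differentiableWithinAt) isOpen_ball).tendsto_at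
    (mem_ball_self hr)
  have hL_deriv : ∀ z ∈ ball a r, _root_.deriv (L z) 0 = fderiv ℂ f z v := fun z hz => by
    simpa using (hL_diff z hz 0 (mem_ball_self hr)).deriv
  rw [hL_deriv a (mem_ball_self hr)] at hderiv
  exact (hderiv.congr' (eventually_of_mem (ball_mem_nhds a hr) fun z hz =>
    hL_deriv z hz)).mono_left nhdsWithin_le_nhds

theorem DifferentiableOn.contDiffOn_one {E F : Type*} [NormedAddCommGroup E]
    [NormedSpace ℂ E] [FiniteDimensional ℂ E] [NormedAddCommGroup F] [NormedSpace ℂ F]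
    [CompleteSpace F] {f : E → F} {U : Set E} (hf : DifferentiableOn ℂ f U) (hU : IsOpen U) :
    ContDiffOn ℂ 1 f U := by
  rw [show (1 : WithTop ℕ∞) = 0 + 1 from rfl, contDiffOn_succ_iff_fderiv_of_isOpen hU]
  exact ⟨hf, by simp, contDiffOn_zero.2 <|
    continuousOn_clm_apply.2 fun v => hf.continuousOn_fderiv_apply hU v⟩

theorem ContDiffAt.exists_levelSet_parametrization {𝕜 E D : Type*} [RCLike 𝕜]
    [NormedAddCommGroup E] [NormedSpace 𝕜 E] [CompleteSpace E] [NormedAddCommGroup D]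
    [NormedSpace 𝕜 D] [FiniteDimensional 𝕜 D] {P : E → D} {a : E} (hP : ContDiffAt 𝕜 1 P a)
    (hsurj : Surjective (fderiv 𝕜 P a)) :
    ∃ ψ : (fderiv 𝕜 P a).ker → E, ψ 0 = a ∧ (∀ᶠ z in 𝓝 0, DifferentiableAt 𝕜 ψ z) ∧
      map ψ (𝓝 0) = 𝓝[P ⁻¹' {P a}] a := by
  have := FiniteDimensional.complete 𝕜 D
  set φ := HasStrictFDerivAt.implicitFunctionDataOfComplemented P (fderiv 𝕜 P a)
    (hP.hasStrictFDerivAt one_ne_zero) (LinearMap.range_eq_top.2 hsurj)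
    (fderiv 𝕜 P a).ker_closedComplemented_of_finiteDimensional_range
  have hleft : φ.leftFun = P := rfl
  have hpt : φ.pt = a := rfl
  have hright : φ.rightFun a = 0 := by simp [φ]
  have hψ : ContDiffAt 𝕜 1 φ.implicitFunction.uncurry (P a, 0) := by
    simpa [ImplicitFunctionData.prodFun, hleft, hpt, hright] using
      φ.contDiffAt_implicitFunction hP
        ((ContinuousLinearMap.contDiff _).comp (contDiff_id.sub contDiff_const)).contDiffAt
        one_ne_zero
  refine ⟨φ.implicitFunction (P a), ?_, ?_, ?_⟩
  · simpa [hleft, hpt, hright] using φ.implicitFunction_apply_image.self_of_nhds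
  · have hslice : Tendsto (fun z => (P a, z)) (𝓝 (0 : (fderiv 𝕜 P a).ker)) (𝓝 (P a, 0)) :=
      (continuous_const.prodMk continuous_id).tendsto' _ _ rfl
    filter_upwards [hslice.eventually (hψ.eventually (by simp))] with z hz
    exact (hz.differentiableAt one_ne_zero).comp z (by fun_prop)
  · simpa [hleft, hpt, hright] using φ.map_implicitFunction_nhdsWithin_preimage univ

section Fibers

variable {E D : Type*} [NormedAddCommGroup E] [NormedSpace ℂ E] [FiniteDimensional ℂ E]
  [NormedAddCommGroup D] [NormedSpace ℂ D] [FiniteDimensional ℂ D]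
  {Y X : Type*} [TopologicalSpace Y] [ChartedSpace E Y] [IsManifold 𝓘(ℂ, E) 1 Y]
  [TopologicalSpace X] [ChartedSpace D X] [IsManifold 𝓘(ℂ, D) 1 X]

theorem MDifferentiable.exists_fiber_parametrization {p : Y → X}
    (hp : MDifferentiable 𝓘(ℂ, E) 𝓘(ℂ, D) p) {y : Y}
    (hsubm : Surjective (mfderiv 𝓘(ℂ, E) 𝓘(ℂ, D) p y)) :
    ∃ (N : Submodule ℂ E) (ψ : N → Y), ψ 0 = y ∧
      (∀ᶠ w in 𝓝 0, MDifferentiableAt 𝓘(ℂ, N) 𝓘(ℂ, E) ψ w) ∧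
      map ψ (𝓝 0) = 𝓝[p ⁻¹' {p y}] y := by
  set c := extChartAt 𝓘(ℂ, E) y
  set e := extChartAt 𝓘(ℂ, D) (p y)
  set P : E → D := e ∘ p ∘ c.symm
  set U : Set E := c.target ∩ c.symm ⁻¹' (p ⁻¹' e.source)
  have hU : IsOpen U := (continuousOn_extChartAt_symm y).isOpen_inter_preimage
    (isOpen_extChartAt_target y) ((isOpen_extChartAt_source (p y)).preimage hp.continuous)
  have hyU : c y ∈ U := ⟨mem_extChartAt_target y, by simp [c, e]⟩
  have hPdiff : DifferentiableOn ℂ P U := by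
    rw [← mdifferentiableOn_iff_differentiableOn]
    refine (mdifferentiableOn_extChartAt.comp ((hp.mdifferentiableOn (s := univ)).comp
      (mdifferentiableOn_extChartAt_symm.mono inter_subset_left) fun _ _ => mem_univ _) ?_)
    intro u hu
    simpa [e, extChartAt_source] using hu.2
  have hP : ContDiffAt ℂ 1 P (c y) := (hPdiff.contDiffOn_one hU).contDiffAt (hU.mem_nhds hyU)
  have hPsurj : Surjective (fderiv ℂ P (c y)) := by
    rwa [(hp y).mfderiv, ModelWithCorners.range_eq_univ, fderivWithin_univ] at hsubm
  obtain ⟨ψ, hψ0, hψdiff, hψmap⟩ := hP.exists_levelSet_parametrization hPsurj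
  have hlevel : 𝓝[P ⁻¹' {P (c y)}] (c y) =
      𝓝[c.symm ⁻¹' (p ⁻¹' {p y}) ∩ range 𝓘(ℂ, E)] (c y) := by
    rw [ModelWithCorners.range_eq_univ, inter_univ]
    refine nhdsWithin_eq_nhdsWithin' (hU.mem_nhds hyU)
      (Set.ext fun u => and_congr_left fun hu => ?_)
    simp only [mem_preimage, mem_singleton_iff, P, comp_apply, c, extChartAt_to_inv]
    exact e.injOn.eq_iff hu.2 (mem_extChartAt_source _)
  refine ⟨_, c.symm ∘ ψ, by rw [comp_apply, hψ0, extChartAt_to_inv], ?_, ?_⟩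
  · have hψU : ∀ᶠ w in 𝓝 0, ψ w ∈ U :=
      (hψmap.le.trans nhdsWithin_le_nhds) (hU.mem_nhds hyU)
    filter_upwards [hψdiff, hψU] with w hw hwU
    exact ((mdifferentiableOn_extChartAt_symm _ hwU.1).mdifferentiableAt
      ((isOpen_extChartAt_target y).mem_nhds hwU.1)).comp w hw.mdifferentiableAt
  · rw [← map_map, hψmap, hlevel, map_extChartAt_symm_nhdsWithin]

theorem MDifferentiable.eventually_eq_of_isMaxOn_norm_fiber {F : Type*} [NormedAddCommGroup F]
    [NormedSpace ℂ F] [StrictConvexSpace ℝ F] {p : Y → X}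
    (hp : MDifferentiable 𝓘(ℂ, E) 𝓘(ℂ, D) p) {y : Y}
    (hsubm : Surjective (mfderiv 𝓘(ℂ, E) 𝓘(ℂ, D) p y)) {g : Y → F}
    (hg : ∀ z ∈ p ⁻¹' {p y}, MDifferentiableAt 𝓘(ℂ, E) 𝓘(ℂ, F) g z)
    (hmax : IsMaxOn (norm ∘ g) (p ⁻¹' {p y}) y) :
    ∀ᶠ z in 𝓝[p ⁻¹' {p y}] y, g z = g y := by
  obtain ⟨N, ψ, hψ0, hψdiff, hψmap⟩ := hp.exists_fiber_parametrization hsubm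
  have hψfib : ∀ᶠ w in 𝓝 (0 : N), ψ w ∈ p ⁻¹' {p y} := hψmap.le self_mem_nhdsWithin
  rw [← hψmap, eventually_map, ← hψ0]
  refine Complex.eventually_eq_of_isLocalMax_norm (f := g ∘ ψ) ?_ ?_
  · filter_upwards [hψdiff, hψfib] with w hw hwK
    exact ((hg _ hwK).comp w hw).differentiableAt
  · filter_upwards [hψfib] with w hw
    simpa [hψ0] using hmax hw

theorem MDifferentiable.apply_eq_of_mem_fiber {F : Type*} [NormedAddCommGroup F]
    [NormedSpace ℂ F] [StrictConvexSpace ℝ F] {p : Y → X}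
    (hp : MDifferentiable 𝓘(ℂ, E) 𝓘(ℂ, D) p) {x : X}
    (hsubm : ∀ y ∈ p ⁻¹' {x}, Surjective (mfderiv 𝓘(ℂ, E) 𝓘(ℂ, D) p y))
    (hcompact : IsCompact (p ⁻¹' {x})) (hconn : IsPreconnected (p ⁻¹' {x})) {g : Y → F}
    (hg : ∀ y ∈ p ⁻¹' {x}, MDifferentiableAt 𝓘(ℂ, E) 𝓘(ℂ, F) g y) :
    ∀ y ∈ p ⁻¹' {x}, ∀ z ∈ p ⁻¹' {x}, g y = g z := by
  intro y hy z hz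
  have hgK : ContinuousOn g (p ⁻¹' {x}) := fun y hy =>
    (hg y hy).continuousAt.continuousWithinAt
  obtain ⟨c, hc, hmax⟩ := hcompact.exists_isMaxOn ⟨y, hy⟩ hgK.norm
  have hconst := hconn.eqOn_const_of_eventually_eq hgK hc fun y' hy' hy'c => by
    obtain rfl : p y' = x := hy'
    have hmax' : IsMaxOn (norm ∘ g) (p ⁻¹' {p y'}) y' := fun z hz => by
      simpa [hy'c] using hmax hz
    simpa [hy'c] using hp.eventually_eq_of_isMaxOn_norm_fiber (hsubm y' rfl) hg hmax'
  exact (hconst hy).trans (hconst hz).symm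

end Fibers

theorem fiber_preserving_set_isOpen_general
    {k d : ℕ} {Y X : Type*} [TopologicalSpace Y] [TopologicalSpace X]
    [ChartedSpace (EuclideanSpace ℂ (Fin k)) Y]
    [IsManifold 𝓘(ℂ, EuclideanSpace ℂ (Fin k)) ((⊤ : ℕ∞) : WithTop ℕ∞) Y]
    [ChartedSpace (EuclideanSpace ℂ (Fin d)) X]
    [IsManifold 𝓘(ℂ, EuclideanSpace ℂ (Fin d)) ((⊤ : ℕ∞) : WithTop ℕ∞) X]
    (p : Y → X)
    (hp : MDifferentiable 𝓘(ℂ, EuclideanSpace ℂ (Fin k)) 𝓘(ℂ, EuclideanSpace ℂ (Fin d)) p)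
    (hp_proper : IsProperMap p)
    -- `p` is a submersion
    (hp_subm : ∀ y : Y, Function.Surjective
      (mfderiv 𝓘(ℂ, EuclideanSpace ℂ (Fin k)) 𝓘(ℂ, EuclideanSpace ℂ (Fin d)) p y))
    -- the fibers of `p` are connected
    (hp_fib : ∀ x : X, IsConnected (p ⁻¹' {x}))
    (F : Y → Y)
    (hF : MDifferentiable 𝓘(ℂ, EuclideanSpace ℂ (Fin k)) 𝓘(ℂ, EuclideanSpace ℂ (Fin k)) F) :
    IsOpen {x : X | ∃ x' : X, F '' (p ⁻¹' {x}) ⊆ p ⁻¹' {x'}} := by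
  rw [isOpen_iff_mem_nhds]
  rintro x₀ ⟨x', hx'⟩
  set e := extChartAt 𝓘(ℂ, EuclideanSpace ℂ (Fin d)) x'
  have hpF : Continuous (p ∘ F) := hp.continuous.comp hF.continuous
  have hnear : ∀ᶠ x in 𝓝 x₀, ∀ y ∈ p ⁻¹' {x}, p (F y) ∈ e.source :=
    hp_proper.isClosedMap.eventually_nhds_fiber x₀ fun y hy => by
      have hFy : p (F y) = x' := hx' (mem_image_of_mem F hy)
      exact hpF.continuousAt.preimage_mem_nhds (by
        rw [comp_apply, hFy]; exact extChartAt_source_mem_nhds x')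
  filter_upwards [hnear] with x hxe
  have hconst := hp.apply_eq_of_mem_fiber (fun y _ => hp_subm y)
    (hp_proper.isCompact_preimage isCompact_singleton) (hp_fib x).isPreconnected
    (g := e ∘ p ∘ F) fun y hy => (mdifferentiableAt_extChartAt (by
      simpa [e, extChartAt_source] using hxe y hy)).comp y ((hp _).comp y (hF y))
  obtain ⟨y₀, hy₀⟩ := (hp_fib x).nonempty
  refine ⟨p (F y₀), ?_⟩
  rintro _ ⟨y, hy, rfl⟩
  exact e.injOn (hxe y hy) (hxe y₀ hy₀) (hconst y hy y₀ hy₀)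

theorem fiber_preserving_set_isOpen
    {k d : ℕ} {Y X : Type*} [TopologicalSpace Y] [TopologicalSpace X]
    [ChartedSpace (EuclideanSpace ℂ (Fin k)) Y]
    [IsManifold 𝓘(ℂ, EuclideanSpace ℂ (Fin k)) ((⊤ : ℕ∞) : WithTop ℕ∞) Y]
    [ChartedSpace (EuclideanSpace ℂ (Fin d)) X]
    [IsManifold 𝓘(ℂ, EuclideanSpace ℂ (Fin d)) ((⊤ : ℕ∞) : WithTop ℕ∞) X]
    [ConnectedSpace X]
    (p : Y → X)
    (hp : MDifferentiable 𝓘(ℂ, EuclideanSpace ℂ (Fin k)) 𝓘(ℂ, EuclideanSpace ℂ (Fin d)) p)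
    (hp_proper : IsProperMap p)
    (hp_surj : Function.Surjective p)
    -- `p` is a submersion
    (hp_subm : ∀ y : Y, Function.Surjective
      (mfderiv 𝓘(ℂ, EuclideanSpace ℂ (Fin k)) 𝓘(ℂ, EuclideanSpace ℂ (Fin d)) p y))
    -- the fibers of `p` are connected
    (hp_fib : ∀ x : X, IsConnected (p ⁻¹' {x}))
    (F : Y → Y)
    (hF : MDifferentiable 𝓘(ℂ, EuclideanSpace ℂ (Fin k)) 𝓘(ℂ, EuclideanSpace ℂ (Fin k)) F) :
    IsOpen {x : X | ∃ x' : X, F '' (p ⁻¹' {x}) ⊆ p ⁻¹' {x'}} :=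
  fiber_preserving_set_isOpen_general p hp hp_proper hp_subm hp_fib F hF
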